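/- arXiv:math/0703057 — 3 statements merged into one kernel-verified Lean document; each statement's English description precedes it below -/
import Mathlib

section
/- Suppose the Schrödinger operator H = -d²/dx² + q(x) preserves an n-dimensional space U of (sufficiently differentiable) functions, i.e. H·U ⊆ U. Let L be the monic differential operator of order n which annihilates all functions in U, written L = (d/dx)ⁿ + Σ_{i=1}ⁿ c_i(x)(d/dx)^{n-i}, and set H̃ = -d²/dx² + q(x) + 2c₁'(x). Then H̃ L = L H as differential operators. -/
open Complex

noncomputable section

/-- The one-dimensional Schrödinger operator `H = -d²/dx² + q(x)`. -/
def schrodingerOp (q : ℂ → ℂ) (f : ℂ → ℂ) : ℂ → ℂ :=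
  fun x => -(iteratedDeriv 2 f x) + q x * f x

namespace DCAux
lemma entire_iter {f : ℂ → ℂ} (hf : Differentiable ℂ f) (m : ℕ) :
    Differentiable ℂ (iteratedDeriv m f) :=
  (hf.contDiff (n := (m + 1 : ℕ))).differentiable_iteratedDeriv m
    (by exact_mod_cast Nat.lt_succ_self m)

lemma entire_deriv {f : ℂ → ℂ} (hf : Differentiable ℂ f) :
    Differentiable ℂ (deriv f) := by
  have := entire_iter hf 1
  rwa [iteratedDeriv_one] at this

lemma iD_fun_add {f g : ℂ → ℂ} (hf : Differentiable ℂ f) (hg : Differentiable ℂ g)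
    (m : ℕ) (x : ℂ) :
    iteratedDeriv m (fun y => f y + g y) x = iteratedDeriv m f x + iteratedDeriv m g x := by
  simp only [← iteratedDerivWithin_univ]
  exact iteratedDerivWithin_add (Set.mem_univ x) uniqueDiffOn_univ
    (hf.contDiff.contDiffWithinAt) (hg.contDiff.contDiffWithinAt)

lemma iD_fun_sub {f g : ℂ → ℂ} (hf : Differentiable ℂ f) (hg : Differentiable ℂ g)
    (m : ℕ) (x : ℂ) :
    iteratedDeriv m (fun y => f y - g y) x = iteratedDeriv m f x - iteratedDeriv m g x := by
  simp only [← iteratedDerivWithin_univ]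
  exact iteratedDerivWithin_sub (Set.mem_univ x) uniqueDiffOn_univ
    (hf.contDiff.contDiffWithinAt) (hg.contDiff.contDiffWithinAt)

lemma iD_const_mul {f : ℂ → ℂ} (hf : Differentiable ℂ f) (a : ℂ) (m : ℕ) (x : ℂ) :
    iteratedDeriv m (fun y => a * f y) x = a * iteratedDeriv m f x := by
  simp only [← iteratedDerivWithin_univ]
  exact iteratedDerivWithin_const_mul (Set.mem_univ x) uniqueDiffOn_univ a
    (hf.contDiff.contDiffWithinAt)

lemma iD_zero_fun (m : ℕ) : iteratedDeriv m (fun _ : ℂ => (0 : ℂ)) = fun _ => 0 := by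
  rw [iteratedDeriv_eq_iterate]
  exact Function.iterate_fixed (by funext x; simp) m

lemma iD_fun_sum {ι : Type*} (s : Finset ι) (F : ι → ℂ → ℂ)
    (hF : ∀ i ∈ s, Differentiable ℂ (F i)) (m : ℕ) (x : ℂ) :
    iteratedDeriv m (fun y => ∑ i ∈ s, F i y) x = ∑ i ∈ s, iteratedDeriv m (F i) x := by
  classical
  induction s using Finset.cons_induction with
  | empty => simp [iD_zero_fun]
  | cons a s ha ih =>
    simp only [Finset.sum_cons]
    rw [iD_fun_add (hF a (Finset.mem_cons_self a s))
      (Differentiable.fun_sum fun i hi => hF i (Finset.mem_cons_of_mem hi)) m x,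
      ih (fun i hi => hF i (Finset.mem_cons_of_mem hi))]

lemma iD_iD (f : ℂ → ℂ) (j k : ℕ) :
    iteratedDeriv k (iteratedDeriv j f) = iteratedDeriv (j + k) f := by
  induction k with
  | zero => simp
  | succ k ih =>
    rw [iteratedDeriv_succ, ih, ← iteratedDeriv_succ]
    congr 1

lemma jet_mul (x : ℂ) : ∀ (m : ℕ) (a g : ℂ → ℂ), Differentiable ℂ a → Differentiable ℂ g →
    (∀ j < m, iteratedDeriv j g x = 0) →
    iteratedDeriv m (fun y => a y * g y) x = a x * iteratedDeriv m g x := by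
  intro m
  induction m with
  | zero => intro a g _ _ _; simp
  | succ m ih =>
    intro a g ha hg hjet
    rw [iteratedDeriv_succ']
    have hd : deriv (fun y => a y * g y) = fun y => deriv a y * g y + a y * deriv g y := by
      funext y; exact deriv_mul (ha y) (hg y)
    rw [hd, iD_fun_add ((entire_deriv ha).fun_mul hg) (ha.fun_mul (entire_deriv hg)) m x,
      ih (deriv a) g (entire_deriv ha) hg (fun j hj => hjet j (by omega)),
      ih a (deriv g) ha (entire_deriv hg)
        (fun j hj => by rw [← iteratedDeriv_succ']; exact hjet (j + 1) (by omega)),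
      hjet m (by omega), ← iteratedDeriv_succ']
    ring

lemma iD2_mul {a h : ℂ → ℂ} (ha : Differentiable ℂ a) (hh : Differentiable ℂ h) (x : ℂ) :
    iteratedDeriv 2 (fun y => a y * h y) x
      = iteratedDeriv 2 a x * h x + 2 * deriv a x * deriv h x + a x * iteratedDeriv 2 h x := by
  have hd : deriv (fun y => a y * h y) = fun y => deriv a y * h y + a y * deriv h y := by
    funext y; exact deriv_mul (ha y) (hh y)
  rw [show (2 : ℕ) = 1 + 1 from rfl, iteratedDeriv_succ, iteratedDeriv_one,
    iteratedDeriv_succ, iteratedDeriv_one, iteratedDeriv_succ, iteratedDeriv_one, hd]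
  have h1 : deriv (fun y => deriv a y * h y + a y * deriv h y) x
      = (deriv (deriv a) x * h x + deriv a x * deriv h x)
        + (deriv a x * deriv h x + a x * deriv (deriv h) x) := by
    rw [deriv_fun_add (((entire_deriv ha).fun_mul hh) x) ((ha.fun_mul (entire_deriv hh)) x),
      deriv_fun_mul ((entire_deriv ha) x) (hh x), deriv_fun_mul (ha x) ((entire_deriv hh) x)]
  rw [h1]; ring

lemma jets_all_zero {n : ℕ} (hn : 0 < n) (c : Fin n → ℂ → ℂ) (hc : ∀ i, Differentiable ℂ (c i))
    (u : ℂ → ℂ) (hu : Differentiable ℂ u)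
    (hLu : ∀ x, iteratedDeriv n u x
      + ∑ i : Fin n, c i x * iteratedDeriv (n - (i.val + 1)) u x = 0)
    (x₀ : ℂ) (hjet : ∀ k < n, iteratedDeriv k u x₀ = 0) :
    ∀ m, iteratedDeriv m u x₀ = 0 := by
  intro m
  induction m using Nat.strong_induction_on with
  | _ m IH =>
  by_cases hm : m < n
  · exact hjet m hm
  · push_neg at hm
    obtain ⟨k, rfl⟩ : ∃ k, m = n + k := ⟨m - n, by omega⟩
    have hG : (fun x => iteratedDeriv n u x
        + ∑ i : Fin n, c i x * iteratedDeriv (n - (i.val + 1)) u x) = fun _ => (0 : ℂ) :=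
      funext hLu
    have h0 : iteratedDeriv k (fun x => iteratedDeriv n u x
        + ∑ i : Fin n, c i x * iteratedDeriv (n - (i.val + 1)) u x) x₀ = 0 := by
      rw [hG, iD_zero_fun]
    rw [iD_fun_add (entire_iter hu n)
        (Differentiable.fun_sum fun i _ => (hc i).fun_mul (entire_iter hu _)) k x₀,
      iD_fun_sum Finset.univ _ (fun i _ => (hc i).fun_mul (entire_iter hu _)) k x₀] at h0
    have hterm : ∀ i : Fin n,
        iteratedDeriv k (fun y => c i y * iteratedDeriv (n - (i.val + 1)) u y) x₀ = 0 := by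
      intro i
      have hilt := i.isLt
      rw [jet_mul x₀ k (c i) _ (hc i) (entire_iter hu _)
        (fun j hj => by
          rw [congrFun (iD_iD u (n - (i.val + 1)) j) x₀]
          exact IH _ (by omega)),
        congrFun (iD_iD u (n - (i.val + 1)) k) x₀, IH _ (by omega), mul_zero]
    rw [Finset.sum_congr rfl (fun i _ => hterm i), Finset.sum_const_zero, add_zero,
      congrFun (iD_iD u n k) x₀] at h0
    exact h0

lemma key {n : ℕ} (hn : 0 < n) (q : ℂ → ℂ) (hq : Differentiable ℂ q)
    (c : Fin n → ℂ → ℂ) (hc : ∀ i, Differentiable ℂ (c i))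
    (g : ℂ → ℂ) (hg : Differentiable ℂ g) (x₀ : ℂ)
    (hjet : ∀ k < n, iteratedDeriv k g x₀ = 0) :
    -(iteratedDeriv 2 (fun x => iteratedDeriv n g x
        + ∑ i : Fin n, c i x * iteratedDeriv (n - (i.val + 1)) g x) x₀)
      + (q x₀ + 2 * deriv (c ⟨0, hn⟩) x₀) * (iteratedDeriv n g x₀
        + ∑ i : Fin n, c i x₀ * iteratedDeriv (n - (i.val + 1)) g x₀)
    = iteratedDeriv n (schrodingerOp q g) x₀
      + ∑ i : Fin n, c i x₀ * iteratedDeriv (n - (i.val + 1)) (schrodingerOp q g) x₀ := by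
  have hgI := entire_iter hg
  -- Step 1: second derivative of `L g`
  have hGsplit : iteratedDeriv 2 (fun x => iteratedDeriv n g x
        + ∑ i : Fin n, c i x * iteratedDeriv (n - (i.val + 1)) g x) x₀
      = iteratedDeriv (n + 2) g x₀
        + ∑ i : Fin n, (2 * deriv (c i) x₀ * iteratedDeriv (n - i.val) g x₀
            + c i x₀ * iteratedDeriv (n + 1 - i.val) g x₀) := by
    rw [iD_fun_add (hgI n) (Differentiable.fun_sum fun i _ => (hc i).fun_mul (hgI _)) 2 x₀]
    congr 1
    · exact congrFun (iD_iD g n 2) x₀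
    · rw [iD_fun_sum Finset.univ _ (fun i _ => (hc i).fun_mul (hgI _)) 2 x₀]
      apply Finset.sum_congr rfl
      intro i _
      have hilt := i.isLt
      rw [iD2_mul (hc i) (hgI _) x₀]
      have e0 : iteratedDeriv (n - (i.val + 1)) g x₀ = 0 := hjet _ (by omega)
      have e1 : deriv (iteratedDeriv (n - (i.val + 1)) g) x₀ = iteratedDeriv (n - i.val) g x₀ := by
        rw [← iteratedDeriv_succ]
        congr 1
        omega
      have e2 : iteratedDeriv 2 (iteratedDeriv (n - (i.val + 1)) g) x₀
          = iteratedDeriv (n + 1 - i.val) g x₀ := by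
        rw [congrFun (iD_iD g (n - (i.val + 1)) 2) x₀]
        congr 1
        omega
      rw [e0, e1, e2, mul_zero, zero_add]
  -- Step 2: value of `L g` at `x₀`
  have hLg : iteratedDeriv n g x₀
      + ∑ i : Fin n, c i x₀ * iteratedDeriv (n - (i.val + 1)) g x₀ = iteratedDeriv n g x₀ := by
    rw [Finset.sum_eq_zero, add_zero]
    intro i _
    have hilt := i.isLt
    rw [hjet _ (by omega), mul_zero]
  -- Step 3: iterated derivatives of `H g` at `x₀`
  have hH : ∀ m ≤ n, iteratedDeriv m (schrodingerOp q g) x₀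
      = -(iteratedDeriv (m + 2) g x₀) + q x₀ * iteratedDeriv m g x₀ := by
    intro m hm
    have hrepr : schrodingerOp q g = fun y => -(iteratedDeriv 2 g y) + q y * g y := rfl
    rw [hrepr, iD_fun_add ((hgI 2).fun_neg) (hq.fun_mul hg) m x₀]
    congr 1
    · rw [iteratedDeriv_fun_neg, congrFun (iD_iD g 2 m) x₀]
      congr 2
      omega
    · exact jet_mul x₀ m q g hq hg (fun j hj => hjet j (by omega))
  -- Step 4: the 2c' sum collapses to its first term
  have hS1 : ∑ i : Fin n, 2 * deriv (c i) x₀ * iteratedDeriv (n - i.val) g x₀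
      = 2 * deriv (c ⟨0, hn⟩) x₀ * iteratedDeriv n g x₀ := by
    rw [Finset.sum_eq_single (⟨0, hn⟩ : Fin n)]
    · norm_num
    · intro i _ hne
      have hilt := i.isLt
      have hzero : i.val ≠ 0 := fun h => hne (Fin.ext h)
      rw [hjet (n - i.val) (by omega), mul_zero]
    · intro h
      exact absurd (Finset.mem_univ _) h
  -- assemble
  rw [hGsplit, hLg, hH n le_rfl, Finset.sum_add_distrib, hS1]
  have hsum2 : ∑ i : Fin n, c i x₀ * iteratedDeriv (n - (i.val + 1)) (schrodingerOp q g) x₀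
      = ∑ i : Fin n, -(c i x₀ * iteratedDeriv (n + 1 - i.val) g x₀) := by
    apply Finset.sum_congr rfl
    intro i _
    have hilt := i.isLt
    rw [hH _ (by omega), hjet (n - (i.val + 1)) (by omega), mul_zero, add_zero]
    have e3 : n - (i.val + 1) + 2 = n + 1 - i.val := by omega
    rw [e3]
    ring
  rw [hsum2, Finset.sum_neg_distrib]
  ring

end DCAux

/-- **Generalized Darboux (Darboux–Crum) transformation** (Proposition 2.1).
Suppose `H = -d²/dx² + q(x)` preserves an `n`-dimensional space `U` of
(sufficiently differentiable) functions.  Let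
`L = (d/dx)ⁿ + ∑_{i=1}ⁿ c_i(x) (d/dx)^{n-i}` be the monic differential operator of
order `n` annihilating all functions of `U` (here `c i` stands for `c_{i+1}`), and set
`H̃ = -d²/dx² + q(x) + 2 c₁'(x)`.  Then `H̃ L = L H`. -/
theorem darboux_crum_intertwining
    (q : ℂ → ℂ) (hq : Differentiable ℂ q)
    (n : ℕ) (hn : 0 < n)
    (U : Submodule ℂ (ℂ → ℂ))
    (hUdim : Module.finrank ℂ U = n)
    (hUsmooth : ∀ u ∈ U, Differentiable ℂ u)
    (hHU : ∀ u ∈ U, schrodingerOp q u ∈ U)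
    (c : Fin n → ℂ → ℂ) (hc : ∀ i, Differentiable ℂ (c i))
    (L : (ℂ → ℂ) → ℂ → ℂ)
    (hL : ∀ f : ℂ → ℂ, ∀ x : ℂ,
      L f x = iteratedDeriv n f x
        + ∑ i : Fin n, c i x * iteratedDeriv (n - (i.val + 1)) f x)
    (hLU : ∀ u ∈ U, ∀ x : ℂ, L u x = 0) :
    ∀ f : ℂ → ℂ, Differentiable ℂ f → ∀ x : ℂ,
      -(iteratedDeriv 2 (L f) x) + (q x + 2 * deriv (c ⟨0, hn⟩) x) * L f x
        = L (schrodingerOp q f) x := by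
  classical
  intro f hf x₀
  haveI : FiniteDimensional ℂ U := FiniteDimensional.of_finrank_pos (hUdim ▸ hn)
  -- the jet map at x₀
  let φ : U →ₗ[ℂ] (Fin n → ℂ) :=
    { toFun := fun u => fun k => iteratedDeriv k.val (u : ℂ → ℂ) x₀
      map_add' := by
        intro u v
        funext k
        have h := DCAux.iD_fun_add (hUsmooth u u.2) (hUsmooth v v.2) k.val x₀
        exact h
      map_smul' := by
        intro a u
        funext k
        have h := DCAux.iD_const_mul (hUsmooth u u.2) a k.val x₀
        exact h }
  have hker : ∀ u : U, φ u = 0 → u = 0 := by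
    intro u hu
    have hu_ent := hUsmooth u u.2
    have hjets : ∀ k < n, iteratedDeriv k (u : ℂ → ℂ) x₀ = 0 := by
      intro k hk
      exact congrFun hu ⟨k, hk⟩
    have hall := DCAux.jets_all_zero hn c hc u hu_ent
      (fun x => by rw [← hL u x]; exact hLU u u.2 x) x₀ hjets
    have hzero : (u : ℂ → ℂ) = fun _ => 0 := by
      funext z
      rw [← taylorSeries_eq_of_entire' x₀ z hu_ent]
      simp only [hall, mul_zero, zero_mul, tsum_zero]
    exact Subtype.ext hzero
  have hinj : Function.Injective φ :=
    LinearMap.ker_eq_bot.mp (LinearMap.ker_eq_bot'.mpr hker)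
  have hsurj : Function.Surjective φ :=
    (LinearMap.injective_iff_surjective_of_finrank_eq_finrank
      (by rw [hUdim, Module.finrank_fin_fun])).mp hinj
  obtain ⟨u, hu⟩ := hsurj (fun k => iteratedDeriv k.val f x₀)
  have hu_ent : Differentiable ℂ (u : ℂ → ℂ) := hUsmooth u u.2
  set g : ℂ → ℂ := fun y => f y - (u : ℂ → ℂ) y with hgdef
  have hg_ent : Differentiable ℂ g := hf.sub hu_ent
  have hfeq : ∀ m x, iteratedDeriv m f x = iteratedDeriv m g x + iteratedDeriv m (u : ℂ → ℂ) x := by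
    intro m x
    have hfu : f = fun y => g y + (u : ℂ → ℂ) y := by
      funext y
      simp [hgdef]
    rw [show iteratedDeriv m f x = iteratedDeriv m (fun y => g y + (u : ℂ → ℂ) y) x from by rw [← hfu]]
    exact DCAux.iD_fun_add hg_ent hu_ent m x
  have hjetg : ∀ k < n, iteratedDeriv k g x₀ = 0 := by
    intro k hk
    have h1 := hfeq k x₀
    have h2 : iteratedDeriv k (u : ℂ → ℂ) x₀ = iteratedDeriv k f x₀ := congrFun hu ⟨k, hk⟩
    linear_combination -h1 - h2
  -- L f agrees with the explicit operator applied to g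
  have hLfLg : L f = fun x => iteratedDeriv n g x
      + ∑ i : Fin n, c i x * iteratedDeriv (n - (i.val + 1)) g x := by
    funext x
    rw [hL f x]
    have hz : iteratedDeriv n (u : ℂ → ℂ) x
        + ∑ i : Fin n, c i x * iteratedDeriv (n - (i.val + 1)) (u : ℂ → ℂ) x = 0 := by
      rw [← hL u x]; exact hLU u u.2 x
    simp only [hfeq, mul_add, Finset.sum_add_distrib]
    linear_combination hz
  -- schrodingerOp splits
  have hHg_ent : Differentiable ℂ (schrodingerOp q g) := by
    have : schrodingerOp q g = fun y => -(iteratedDeriv 2 g y) + q y * g y := rfl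
    rw [this]
    exact ((DCAux.entire_iter hg_ent 2).neg).add (hq.mul hg_ent)
  have hHu_mem : schrodingerOp q (u : ℂ → ℂ) ∈ U := hHU u u.2
  have hHu_ent : Differentiable ℂ (schrodingerOp q (u : ℂ → ℂ)) := hUsmooth _ hHu_mem
  have hHsplit : schrodingerOp q f
      = fun y => schrodingerOp q g y + schrodingerOp q (u : ℂ → ℂ) y := by
    funext y
    simp only [schrodingerOp, hfeq]
    ring
  have hRHS : L (schrodingerOp q f) x₀
      = iteratedDeriv n (schrodingerOp q g) x₀
        + ∑ i : Fin n, c i x₀ * iteratedDeriv (n - (i.val + 1)) (schrodingerOp q g) x₀ := by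
    rw [hL _ x₀]
    have hsplit : ∀ m, iteratedDeriv m (schrodingerOp q f) x₀
        = iteratedDeriv m (schrodingerOp q g) x₀
          + iteratedDeriv m (schrodingerOp q (u : ℂ → ℂ)) x₀ := by
      intro m
      rw [hHsplit]
      exact DCAux.iD_fun_add hHg_ent hHu_ent m x₀
    have hz : iteratedDeriv n (schrodingerOp q (u : ℂ → ℂ)) x₀
        + ∑ i : Fin n, c i x₀
          * iteratedDeriv (n - (i.val + 1)) (schrodingerOp q (u : ℂ → ℂ)) x₀ = 0 := by
      rw [← hL _ x₀]; exact hLU _ hHu_mem x₀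
    simp only [hsplit, mul_add, Finset.sum_add_distrib]
    linear_combination hz
  rw [hRHS, hLfLg]
  exact DCAux.key hn q hq c hc g hg_ent x₀ hjetg
end
end

section
/- Let Ξ(x,E) be the doubly-periodic function of Proposition 2.6 and Q(E) the associated monic polynomial of degree 2g+1. Then the function Λ(x,E) = √(Ξ(x,E)) · exp ∫ ( √(-Q(E)) / Ξ(x,E) ) dx is a solution to the differential equation ( -d²/dx² + Σ_{i=0}³ l_i(l_i+1)℘(x+ω_i) - E ) f(x) = 0. -/
open Complex

noncomputable section

def latticePt (ω₁ ω₃ : ℂ) (p : ℤ × ℤ) : ℂ := 2 * p.1 * ω₁ + 2 * p.2 * ω₃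

/-- Weierstrass ℘-function with periods `2ω₁, 2ω₃`. -/
def wp (ω₁ ω₃ : ℂ) (z : ℂ) : ℂ :=
  1 / z ^ 2 + ∑' p : ℤ × ℤ,
    if p = 0 then 0 else
      1 / (z - latticePt ω₁ ω₃ p) ^ 2 - 1 / latticePt ω₁ ω₃ p ^ 2

/-- Weierstrass ζ-function. -/
def wzeta (ω₁ ω₃ : ℂ) (z : ℂ) : ℂ :=
  1 / z + ∑' p : ℤ × ℤ,
    if p = 0 then 0 else
      1 / (z - latticePt ω₁ ω₃ p) + 1 / latticePt ω₁ ω₃ p + z / latticePt ω₁ ω₃ p ^ 2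

/-- Weierstrass σ-function. -/
def wsigma (ω₁ ω₃ : ℂ) (z : ℂ) : ℂ :=
  z * ∏' p : ℤ × ℤ,
    if p = 0 then 1 else
      (1 - z / latticePt ω₁ ω₃ p) *
        Complex.exp (z / latticePt ω₁ ω₃ p + z ^ 2 / (2 * latticePt ω₁ ω₃ p ^ 2))

/-- Half periods ω₀=0, ω₁, ω₂=-ω₁-ω₃, ω₃. -/
def hper (ω₁ ω₃ : ℂ) : Fin 4 → ℂ := ![0, ω₁, -ω₁ - ω₃, ω₃]

def halfLattice (ω₁ ω₃ : ℂ) : Set ℂ := {z | ∃ m n : ℤ, z = m * ω₁ + n * ω₃}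

def heunPotential (ω₁ ω₃ : ℂ) (l : Fin 4 → ℂ) (x : ℂ) : ℂ :=
  ∑ i : Fin 4, l i * (l i + 1) * wp ω₁ ω₃ (x + hper ω₁ ω₃ i)

def heunOp (ω₁ ω₃ : ℂ) (l : Fin 4 → ℂ) (f : ℂ → ℂ) : ℂ → ℂ :=
  fun x => -(iteratedDeriv 2 f x) + heunPotential ω₁ ω₃ l x * f x


/-- The values `e_i = ℘(ω_i)`. -/
def eval' (ω₁ ω₃ : ℂ) (i : Fin 4) : ℂ := wp ω₁ ω₃ (hper ω₁ ω₃ i)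

lemma analyticAt_deriv' {f : ℂ → ℂ} {x : ℂ} (h : AnalyticAt ℂ f x) :
    AnalyticAt ℂ (deriv f) x := by
  have h1 : AnalyticAt ℂ (fun y => (fderiv ℂ f y) 1) x :=
    ((ContinuousLinearMap.apply ℂ ℂ (1:ℂ)).analyticAt _).comp h.fderiv
  exact h1

lemma lattice_closed (ω₁ ω₃ : ℂ) (hω : ω₁ ≠ 0) (hτ : 0 < (ω₃ / ω₁).im) :
    IsClosed (halfLattice ω₁ ω₃) := by
  set f : (ℝ × ℝ) →ₗ[ℝ] ℂ :=
    (LinearMap.fst ℝ ℝ ℝ).smulRight ω₁ + (LinearMap.snd ℝ ℝ ℝ).smulRight ω₃ with hf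
  have hfval : ∀ p : ℝ × ℝ, f p = p.1 * ω₁ + p.2 * ω₃ := by
    intro p; simp [hf, Complex.real_smul]
  have hinj : Function.Injective f := by
    rw [← LinearMap.ker_eq_bot, LinearMap.ker_eq_bot']
    intro p hp
    rw [hfval] at hp
    have h2 : (p.1 : ℂ) + p.2 * (ω₃ / ω₁) = 0 := by
      field_simp
      linear_combination hp
    have him : p.2 * (ω₃ / ω₁).im = 0 := by
      have := congrArg Complex.im h2
      simpa using this
    have hp2 : p.2 = 0 := by
      rcases mul_eq_zero.1 him with h | h
      · exact h
      · exact absurd h (ne_of_gt hτ)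
    have hp1 : p.1 = 0 := by
      rw [hp2] at hp
      simpa [hω] using hp
    exact Prod.ext hp1 hp2
  set e : (ℝ × ℝ) ≃ₗ[ℝ] ℂ :=
    f.linearEquivOfInjective hinj (by simp [Complex.finrank_real_complex]) with he
  have heval : ∀ p : ℝ × ℝ, e p = p.1 * ω₁ + p.2 * ω₃ := by
    intro p; rw [he, LinearMap.linearEquivOfInjective_apply, hfval]
  have hS : IsClosed ((Set.range ((↑) : ℤ → ℝ)) ×ˢ (Set.range ((↑) : ℤ → ℝ))) :=
    (Int.isClosedEmbedding_coe_real.isClosed_range).prod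
      Int.isClosedEmbedding_coe_real.isClosed_range
  have hC : IsClosed (e.toContinuousLinearEquiv.toHomeomorph ''
      ((Set.range ((↑) : ℤ → ℝ)) ×ˢ (Set.range ((↑) : ℤ → ℝ)))) :=
    (Homeomorph.isClosedMap _) _ hS
  convert hC using 1
  ext z
  constructor
  · rintro ⟨m, n, rfl⟩
    exact ⟨((m : ℝ), (n : ℝ)), ⟨⟨m, rfl⟩, ⟨n, rfl⟩⟩, by simp [heval]⟩
  · rintro ⟨p, ⟨⟨m, hm⟩, ⟨n, hn⟩⟩, rfl⟩
    exact ⟨m, n, by simp [heval, ← hm, ← hn]⟩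

/-- **Proposition 2.7** ([Tak1, Prop. 3.7]).  Let `Ξ(x,E)` be the doubly periodic
function of Proposition 2.6 and `Q(E)` the associated monic polynomial of degree
`2g+1`.  Then `Λ(x,E) = √(Ξ(x,E)) · exp ∫ √(-Q(E))/Ξ(x,E) dx` solves
`(-d²/dx² + ∑_{i=0}³ l_i(l_i+1)℘(x+ω_i) - E) f = 0`.  Here `s` is a branch of
`√(Ξ(·,E))` and `F` an antiderivative of `√(-Q(E))/Ξ(·,E)`. -/
theorem Lambda_solves_Heun
    (ω₁ ω₃ : ℂ) (hω : ω₁ ≠ 0) (hτ : 0 < (ω₃ / ω₁).im)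
    (l : Fin 4 → ℕ) (g : ℕ)
    (Xi : ℂ → ℂ → ℂ) (E : ℂ)
    -- `Ξ(·,E)` satisfies the third-order equation (2.13)
    (hXiODE : ∀ x ∉ halfLattice ω₁ ω₃,
      iteratedDeriv 3 (fun y => Xi y E) x
        - 4 * (heunPotential ω₁ ω₃ (fun i => (l i : ℂ)) x - E)
            * deriv (fun y => Xi y E) x
        - 2 * deriv (heunPotential ω₁ ω₃ (fun i => (l i : ℂ))) x * Xi x E = 0)
    (hXiAnalytic : ∀ x ∉ halfLattice ω₁ ω₃, AnalyticAt ℂ (fun y => Xi y E) x)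
    -- `Q` is the monic polynomial of degree `2g+1` with
    -- `Q(E) = Ξ²(E-u) + ½ΞΞ_{xx} - ¼(Ξ_x)²`
    (Q : Polynomial ℂ) (hQmonic : Q.Monic) (hQdeg : Q.natDegree = 2 * g + 1)
    (hQ : ∀ x ∉ halfLattice ω₁ ω₃,
      Q.eval E
        = Xi x E ^ 2 * (E - heunPotential ω₁ ω₃ (fun i => (l i : ℂ)) x)
          + (1 / 2) * Xi x E * iteratedDeriv 2 (fun z => Xi z E) x
          - (1 / 4) * (deriv (fun z => Xi z E) x) ^ 2)
    -- `s = √(Ξ(·,E))`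
    (s : ℂ → ℂ)
    (hs : ∀ x ∉ halfLattice ω₁ ω₃, s x ^ 2 = Xi x E)
    (hsa : ∀ x ∉ halfLattice ω₁ ω₃, Xi x E ≠ 0 → AnalyticAt ℂ s x)
    -- `F = ∫ √(-Q(E))/Ξ(x,E) dx`
    (F : ℂ → ℂ)
    (hF : ∀ x ∉ halfLattice ω₁ ω₃, Xi x E ≠ 0 →
      HasDerivAt F ((-Q.eval E) ^ ((1 : ℂ) / 2) / Xi x E) x) :
    ∀ x ∉ halfLattice ω₁ ω₃, Xi x E ≠ 0 →
      -(iteratedDeriv 2 (fun y => s y * Complex.exp (F y)) x)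
        + (heunPotential ω₁ ω₃ (fun i => (l i : ℂ)) x - E)
            * (s x * Complex.exp (F x)) = 0 := by
  intro x hx hXne
  set c := (-Q.eval E) ^ ((1 : ℂ)/2) with hc
  have hc2 : c * c = -Q.eval E := by
    by_cases h : (-Q.eval E) = 0
    · rw [hc, h, Complex.zero_cpow (by norm_num : (1:ℂ)/2 ≠ 0), mul_zero]
    · rw [hc, ← Complex.cpow_add _ _ h]
      norm_num
  have hclosed : IsClosed (halfLattice ω₁ ω₃) := lattice_closed ω₁ ω₃ hω hτ
  have hnl : ∀ᶠ y in nhds x, y ∉ halfLattice ω₁ ω₃ := hclosed.isOpen_compl.mem_nhds hx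
  have hXc : ContinuousAt (fun y => Xi y E) x := (hXiAnalytic x hx).continuousAt
  have hXne' : ∀ᶠ y in nhds x, Xi y E ≠ 0 := hXc.eventually_ne hXne
  have hsax : AnalyticAt ℂ s x := hsa x hx hXne
  have hsev : ∀ᶠ y in nhds x, AnalyticAt ℂ s y := hsax.eventually_analyticAt
  have hsx_ne : s x ≠ 0 := by
    intro h
    apply hXne
    rw [← hs x hx, h]
    ring
  -- first derivative of Λ in a neighborhood
  have hG : ∀ᶠ y in nhds x,
      HasDerivAt (fun z => s z * Complex.exp (F z))
        ((deriv s y + c / s y) * Complex.exp (F y)) y := by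
    filter_upwards [hnl, hXne', hsev] with y h1 h2 h3
    have hsy : s y ≠ 0 := by
      intro h
      apply h2
      rw [← hs y h1, h]
      ring
    have hFy : HasDerivAt F (c / s y ^ 2) y := by
      have := hF y h1 h2
      rwa [← hs y h1] at this
    have hmul : HasDerivAt (fun z => s z * Complex.exp (F z)) _ y :=
      (h3.differentiableAt.hasDerivAt).mul hFy.cexp
    convert hmul using 1
    field_simp
  have hderivΛ : deriv (fun z => s z * Complex.exp (F z)) =ᶠ[nhds x]
      fun y => (deriv s y + c / s y) * Complex.exp (F y) :=
    hG.mono fun y h => h.deriv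
  have hFx : HasDerivAt F (c / s x ^ 2) x := by
    have := hF x hx hXne
    rwa [← hs x hx] at this
  have hdsx : HasDerivAt s (deriv s x) x := hsax.differentiableAt.hasDerivAt
  have hd2s : HasDerivAt (deriv s) (deriv (deriv s) x) x :=
    (analyticAt_deriv' hsax).differentiableAt.hasDerivAt
  have hinv : HasDerivAt (fun y => c / s y)
      ((0 * s x - c * deriv s x) / s x ^ 2) x :=
    (hasDerivAt_const x c).div hdsx hsx_ne
  have hGx : HasDerivAt (fun y => (deriv s y + c / s y) * Complex.exp (F y))
      ((deriv (deriv s) x + (0 * s x - c * deriv s x) / s x ^ 2) * Complex.exp (F x)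
        + (deriv s x + c / s x) * (Complex.exp (F x) * (c / s x ^ 2))) x :=
    (hd2s.add hinv).mul hFx.cexp
  have hiter : iteratedDeriv 2 (fun y => s y * Complex.exp (F y)) x
      = (deriv (deriv s) x + (0 * s x - c * deriv s x) / s x ^ 2) * Complex.exp (F x)
        + (deriv s x + c / s x) * (Complex.exp (F x) * (c / s x ^ 2)) := by
    rw [iteratedDeriv_succ, iteratedDeriv_one, hderivΛ.deriv_eq]
    exact hGx.deriv
  -- derivatives of Ξ in terms of s
  have hXieq' : ∀ᶠ y in nhds x,
      (fun z => Xi z E) =ᶠ[nhds y] fun z => s z ^ 2 := by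
    filter_upwards [hnl.eventually_nhds] with y hy
    exact hy.mono fun z hz => (hs z hz).symm
  have hd1Xi : deriv (fun z => Xi z E) x = 2 * s x * deriv s x := by
    rw [hXieq'.self_of_nhds.deriv_eq]
    have h2 : HasDerivAt (fun z => s z ^ 2) (2 * s x * deriv s x) x := by
      have h3 : HasDerivAt (fun z => s z ^ 2) _ x := hdsx.pow 2
      norm_num at h3
      convert h3 using 1 <;> ring
    exact h2.deriv
  have hderivXi : deriv (fun z => Xi z E) =ᶠ[nhds x] fun y => 2 * s y * deriv s y := by
    filter_upwards [hXieq', hsev] with y h1 h3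
    rw [h1.deriv_eq]
    have h2 : HasDerivAt (fun z => s z ^ 2) (2 * s y * deriv s y) y := by
      have h4 : HasDerivAt (fun z => s z ^ 2) _ y := (h3.differentiableAt.hasDerivAt).pow 2
      norm_num at h4
      convert h4 using 1 <;> ring
    exact h2.deriv
  have hd2Xi : iteratedDeriv 2 (fun z => Xi z E) x
      = 2 * (deriv s x * deriv s x + s x * deriv (deriv s) x) := by
    rw [iteratedDeriv_succ, iteratedDeriv_one, hderivXi.deriv_eq]
    have h2 : HasDerivAt (fun y => 2 * s y * deriv s y)
        (2 * (deriv s x * deriv s x + s x * deriv (deriv s) x)) x := by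
      have : HasDerivAt (fun y => 2 * s y * deriv s y) _ x := (hdsx.const_mul (2:ℂ)).mul hd2s
      convert this using 1
      ring
    exact h2.deriv
  have hQx := hQ x hx
  rw [hd1Xi, hd2Xi, ← hs x hx] at hQx
  rw [hiter]
  have hexp : Complex.exp (F x) ≠ 0 := Complex.exp_ne_zero (F x)
  field_simp
  linear_combination (-Complex.exp (F x)) * hc2
    + (Complex.exp (F x)) * hQx
end
end

section
/- Assume l_i ∈ ℤ_{≥0} for i = 0,1,2,3. Let H = -d²/dx² + Σ_{i=0}³ l_i(l_i+1)℘(x+ω_i), let A be the commuting differential operator of odd order 2g+1 constructed in Proposition 2.4, and let Q(E) be the monic polynomial of degree 2g+1 defined by Q(E) = Ξ²(E - u(x)) + (1/2)Ξ Ξ_xx - (1/4)(Ξ_x)². Then A² + Q(H) = 0 as differential operators. -/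
open Complex

noncomputable section

namespace AQH

open Topology Filter EisensteinSeries

theorem iteratedDeriv_two (f : ℂ → ℂ) : iteratedDeriv 2 f = deriv (deriv f) := by
  rw [show (2:ℕ) = 1 + 1 from rfl, iteratedDeriv_succ, iteratedDeriv_one]

theorem lattice_lb (ω₁ ω₃ : ℂ) (hω : ω₁ ≠ 0) (hτ : 0 < (ω₃ / ω₁).im) :
    ∃ δ > 0, ∀ m n : ℤ, δ * max m.natAbs n.natAbs ≤ ‖m * ω₁ + n * ω₃‖ := by
  set τ : UpperHalfPlane := ⟨ω₃ / ω₁, hτ⟩ with hτdef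
  have hab : 0 < ‖ω₁‖ := by simpa using hω
  refine ⟨‖ω₁‖ * EisensteinSeries.r τ, mul_pos hab (r_pos τ), fun m n => ?_⟩
  rcases eq_or_ne (![n, m]) 0 with h0 | h0
  · have hn : n = 0 := congrFun h0 0
    have hm : m = 0 := congrFun h0 1
    simp [hn, hm]
  · have hle := EisensteinSeries.r_mul_max_le τ h0
    have hnorm : ‖![n, m]‖ = (max n.natAbs m.natAbs : ℕ) := by
      rw [EisensteinSeries.norm_eq_max_natAbs]; simp
    rw [hnorm] at hle
    have heq : m * ω₁ + n * ω₃ = (n * ↑τ + m) * ω₁ := by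
      rw [hτdef]; push_cast; field_simp; ring
    rw [heq, norm_mul]
    have hle2 : EisensteinSeries.r τ * ((max n.natAbs m.natAbs : ℕ) : ℝ) ≤ ‖(n : ℂ) * ↑τ + m‖ := by
      simpa using hle
    calc ‖ω₁‖ * EisensteinSeries.r τ * ((max m.natAbs n.natAbs : ℕ) : ℝ)
        = ‖ω₁‖ * (EisensteinSeries.r τ * ((max n.natAbs m.natAbs : ℕ) : ℝ)) := by
          rw [max_comm]; ring
      _ ≤ ‖ω₁‖ * ‖(n : ℂ) * ↑τ + m‖ := by gcongr
      _ = ‖(n : ℂ) * ↑τ + m‖ * ‖ω₁‖ := mul_comm _ _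

section
variable {ω₁ ω₃ : ℂ} {δ : ℝ}
variable (hδpos : 0 < δ)
variable (hδ : ∀ m n : ℤ, δ * max m.natAbs n.natAbs ≤ ‖m * ω₁ + n * ω₃‖)


theorem finite_pts (δpos : 0 < δ)
    (hδ : ∀ m n : ℤ, δ * max m.natAbs n.natAbs ≤ ‖m * ω₁ + n * ω₃‖) (Rb : ℝ) :
    {q : ℤ × ℤ | ‖q.1 * ω₁ + q.2 * ω₃‖ ≤ Rb}.Finite := by
  set N : ℕ := ⌈Rb / δ⌉₊ with hN
  apply Set.Finite.subset (Set.finite_Icc ((-(N : ℤ), -(N : ℤ))) (((N : ℤ), (N : ℤ))))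
  rintro ⟨m, n⟩ hq
  simp only [Set.mem_setOf_eq] at hq
  have h1 : δ * max m.natAbs n.natAbs ≤ Rb := le_trans (hδ m n) hq
  have h2 : ((max m.natAbs n.natAbs : ℕ) : ℝ) ≤ Rb / δ := by
    rw [le_div_iff₀ δpos]; linarith [h1]
  have h3 : max m.natAbs n.natAbs ≤ N := by
    have := le_trans h2 (Nat.le_ceil (Rb / δ))
    exact_mod_cast this
  have hm : |m| ≤ (N : ℤ) := by
    rw [Int.abs_eq_natAbs]; exact_mod_cast le_trans (le_max_left _ _) h3
  have hn : |n| ≤ (N : ℤ) := by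
    rw [Int.abs_eq_natAbs]; exact_mod_cast le_trans (le_max_right _ _) h3
  rw [Set.mem_Icc]
  exact ⟨⟨(abs_le.mp hm).1, (abs_le.mp hn).1⟩, ⟨(abs_le.mp hm).2, (abs_le.mp hn).2⟩⟩

theorem summable_cubed (δpos : 0 < δ)
    (hδ : ∀ m n : ℤ, δ * max m.natAbs n.natAbs ≤ ‖m * ω₁ + n * ω₃‖) {c : ℝ}
    (hc : 0 ≤ c) :
    Summable (fun q : ℤ × ℤ => c / ‖q.1 * ω₁ + q.2 * ω₃‖ ^ 3) := by
  have hsum : Summable fun x : Fin 2 → ℤ => ‖x‖ ^ (-(3:ℝ)) :=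
    EisensteinSeries.summable_one_div_norm_rpow (by norm_num)
  have hsum2 : Summable fun q : ℤ × ℤ => ‖(![q.1, q.2] : Fin 2 → ℤ)‖ ^ (-(3:ℝ)) := by
    have := ((finTwoArrowEquiv ℤ).symm.summable_iff (f := fun x : Fin 2 → ℤ => ‖x‖ ^ (-(3:ℝ)))).mpr hsum
    simpa [Function.comp_def, finTwoArrowEquiv] using this
  apply Summable.of_nonneg_of_le (fun q => by positivity) _ (hsum2.mul_left (c / δ ^ 3))
  intro q
  rcases eq_or_ne q 0 with rfl | hq
  · simp only [Prod.fst_zero, Prod.snd_zero, Int.cast_zero, zero_mul, add_zero, norm_zero]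
    rw [show (0:ℝ)^3 = 0 by norm_num, div_zero]
    positivity
  · have hM : (1 : ℕ) ≤ max q.1.natAbs q.2.natAbs := by
      rcases (not_and_or.mp (fun h2 : q.1 = 0 ∧ q.2 = 0 => hq (Prod.ext h2.1 h2.2))) with h1 | h1
      · have := Int.natAbs_pos.mpr h1; omega
      · have := Int.natAbs_pos.mpr h1; omega
    set M : ℕ := max q.1.natAbs q.2.natAbs with hM'
    have hMpos : (0:ℝ) < M := by exact_mod_cast lt_of_lt_of_le one_pos (by exact_mod_cast hM)
    have hnorm : ‖(![q.1, q.2] : Fin 2 → ℤ)‖ = (M : ℝ) := by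
      rw [EisensteinSeries.norm_eq_max_natAbs]; simp [hM']
    have hrpow : ‖(![q.1, q.2] : Fin 2 → ℤ)‖ ^ (-(3:ℝ)) = ((M : ℝ) ^ 3)⁻¹ := by
      rw [hnorm, ← Real.rpow_natCast (M:ℝ) 3, ← Real.rpow_neg (le_of_lt hMpos)]
      norm_num
    have hlow : δ * M ≤ ‖q.1 * ω₁ + q.2 * ω₃‖ := by
      have := hδ q.1 q.2; exact_mod_cast this
    have habs : (0:ℝ) < δ * M := mul_pos δpos hMpos
    calc c / ‖q.1 * ω₁ + q.2 * ω₃‖ ^ 3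
        ≤ c / (δ * M) ^ 3 := by
          apply div_le_div_of_nonneg_left hc (by positivity)
          exact pow_le_pow_left₀ (le_of_lt habs) hlow 3
      _ = c / δ ^ 3 * ‖(![q.1, q.2] : Fin 2 → ℤ)‖ ^ (-(3:ℝ)) := by
          rw [hrpow, mul_pow, div_eq_mul_inv, mul_inv, div_eq_mul_inv, mul_assoc]


include hδpos hδ in
/-- around any point not in the half lattice there is a closed ball avoiding the half lattice. -/
theorem exists_ball_disjoint {x : ℂ} (hx : x ∉ halfLattice ω₁ ω₃) :
    ∃ ε > 0, ∀ z ∈ Metric.closedBall x ε, z ∉ halfLattice ω₁ ω₃ := by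
  have hT : {q : ℤ × ℤ | ‖q.1 * ω₁ + q.2 * ω₃ - x‖ ≤ 1}.Finite := by
    apply Set.Finite.subset (finite_pts hδpos hδ (‖x‖ + 1))
    intro q hq
    simp only [Set.mem_setOf_eq] at hq ⊢
    calc ‖q.1 * ω₁ + q.2 * ω₃‖
        = ‖(q.1 * ω₁ + q.2 * ω₃ - x) + x‖ := by ring_nf
      _ ≤ ‖q.1 * ω₁ + q.2 * ω₃ - x‖ + ‖x‖ := norm_add_le _ _
      _ ≤ ‖x‖ + 1 := by linarith
  set F := hT.toFinset with hF
  set d : ℤ × ℤ → ℝ := fun q => ‖q.1 * ω₁ + q.2 * ω₃ - x‖ with hd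
  set G : Finset ℝ := insert 1 (F.image d) with hG
  have hGne : G.Nonempty := ⟨1, Finset.mem_insert_self _ _⟩
  set ε : ℝ := G.min' hGne with hε
  have hGpos : ∀ y ∈ G, 0 < y := by
    intro y hy
    rcases Finset.mem_insert.mp hy with h | h
    · rw [h]; norm_num
    · rcases Finset.mem_image.mp h with ⟨q, hqF, hqd⟩
      rw [← hqd, hd]
      have hne : (q.1 : ℂ) * ω₁ + q.2 * ω₃ - x ≠ 0 := by
        intro h0
        exact hx ⟨q.1, q.2, by linear_combination -h0⟩
      simpa using hne
  have hεpos : 0 < ε := hGpos _ (G.min'_mem hGne)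
  refine ⟨ε / 2, by positivity, fun z hz hzS => ?_⟩
  rcases hzS with ⟨m, n, rfl⟩
  have hdist : ‖(m : ℂ) * ω₁ + n * ω₃ - x‖ ≤ ε / 2 := by
    rw [Metric.mem_closedBall, Complex.dist_eq] at hz; exact hz
  have hε1 : ε ≤ 1 := G.min'_le 1 (Finset.mem_insert_self _ _)
  have hmem : (m, n) ∈ F := by
    rw [hF, Set.Finite.mem_toFinset]
    simp only [Set.mem_setOf_eq]
    calc ‖(m:ℂ) * ω₁ + n * ω₃ - x‖ ≤ ε / 2 := hdist
      _ ≤ 1 := by linarith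
  have : ε ≤ d (m, n) := G.min'_le _ (Finset.mem_insert_of_mem (Finset.mem_image_of_mem d hmem))
  rw [hd] at this
  simp only at this
  linarith


theorem latticePt_mem_halfLattice (p : ℤ × ℤ) : latticePt ω₁ ω₃ p ∈ halfLattice ω₁ ω₃ :=
  ⟨2 * p.1, 2 * p.2, by rw [latticePt]; push_cast; ring⟩

include hδpos hδ in
theorem wp_analyticAt {x : ℂ} (hx : x ∉ halfLattice ω₁ ω₃) : AnalyticAt ℂ (wp ω₁ ω₃) x := by
  obtain ⟨ε, hεpos, hball⟩ := exists_ball_disjoint hδpos hδ hx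
  set B := Metric.ball x ε with hB
  have hBS : ∀ z ∈ B, z ∉ halfLattice ω₁ ω₃ := fun z hz =>
    hball z (Metric.ball_subset_closedBall hz)
  set w : ℤ × ℤ → ℂ := latticePt ω₁ ω₃ with hw
  set t : ℤ × ℤ → ℂ → ℂ := fun p z =>
    if p = 0 then 0 else 1 / (z - w p) ^ 2 - 1 / w p ^ 2 with ht
  have hzw : ∀ z ∈ B, ∀ p, z ≠ w p := by
    intro z hz p h
    exact hBS z hz (h ▸ latticePt_mem_halfLattice p)
  have hz0 : ∀ z ∈ B, z ≠ 0 := by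
    intro z hz h
    exact hBS z hz (h ▸ ⟨0, 0, by simp⟩)
  -- each partial sum is differentiable on B
  have hdiff : ∀ s : Finset (ℤ × ℤ), DifferentiableOn ℂ (fun z => ∑ p ∈ s, t p z) B := by
    intro s
    apply DifferentiableOn.fun_sum
    intro p _
    rcases eq_or_ne p 0 with rfl | hp
    · simp only [ht, if_pos rfl]; exact differentiableOn_const 0
    · simp only [ht, if_neg hp]
      apply DifferentiableOn.sub _ (differentiableOn_const _)
      apply DifferentiableOn.div (differentiableOn_const 1)
        (((differentiable_id.sub_const _).pow 2).differentiableOn)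
      intro z hz
      exact pow_ne_zero 2 (sub_ne_zero.mpr (hzw z hz p))
  set R : ℝ := ‖x‖ + ε with hR
  have hRpos : 0 < R := by positivity
  have hzR : ∀ z ∈ B, ‖z‖ ≤ R := by
    intro z hz
    rw [hB, Metric.mem_ball, Complex.dist_eq] at hz
    calc ‖z‖ = ‖x + (z - x)‖ := by ring_nf
      _ ≤ ‖x‖ + ‖z - x‖ := norm_add_le _ _
      _ ≤ R := by rw [hR]; linarith
  -- summable bound
  have hψ : Function.Injective (fun p : ℤ × ℤ => (2 * p.1, 2 * p.2)) := by
    intro p q h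
    simp only [Prod.mk.injEq] at h
    exact Prod.ext (by omega) (by omega)
  have hwq : ∀ p : ℤ × ℤ, w p = ((2*p.1 : ℤ) : ℂ) * ω₁ + ((2*p.2 : ℤ) : ℂ) * ω₃ := by
    intro p; rw [hw, latticePt]; push_cast; ring
  have hu : Summable (fun p : ℤ × ℤ => 12 * R / ‖w p‖ ^ 3) := by
    have h1 := (summable_cubed hδpos hδ (c := 12 * R) (by positivity)).comp_injective hψ
    apply h1.congr
    intro p
    simp only [Function.comp]
    rw [hwq p]
  -- eventual bound
  have hbound : ∀ᶠ p in Filter.cofinite, ∀ z ∈ B,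
      ‖t p z‖ ≤ 12 * R / ‖w p‖ ^ 3 := by
    have hfin : {p : ℤ × ℤ | ‖w p‖ ≤ 2 * R + 2}.Finite := by
      have := (finite_pts hδpos hδ (2 * R + 2)).preimage
        (Set.injOn_of_injective hψ)
      apply Set.Finite.subset this
      intro p hp
      simp only [Set.mem_preimage, Set.mem_setOf_eq] at hp ⊢
      rw [← hwq p]; exact hp
    rw [Filter.eventually_cofinite]
    apply Set.Finite.subset hfin
    intro p hp
    simp only [Set.mem_setOf_eq] at hp ⊢
    by_contra hA
    push_neg at hA
    apply hp
    intro z hz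
    set A : ℝ := ‖w p‖ with hA'
    have hApos : 2 * R + 2 < A := hA
    have hp0 : p ≠ 0 := by
      intro h
      rw [h] at hA'
      have : w 0 = 0 := by rw [hw, latticePt]; simp
      rw [this] at hA'
      simp at hA'
      linarith
    have hwne : w p ≠ 0 := by
      intro h; rw [hA', h] at hApos; simp at hApos; linarith
    have hzwne : z - w p ≠ 0 := sub_ne_zero.mpr (hzw z hz p)
    have hkey : t p z = z * (2 * w p - z) / ((z - w p) ^ 2 * w p ^ 2) := by
      rw [ht]
      simp only [if_neg hp0]
      field_simp
      ring
    rw [hkey]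
    have hzRz := hzR z hz
    have h2wz : ‖2 * w p - z‖ ≤ 3 * A := by
      calc ‖2 * w p - z‖ ≤ ‖2 * w p‖ + ‖z‖ := by
            rw [sub_eq_add_neg]
            refine (norm_add_le _ _).trans ?_
            simp
        _ ≤ 2 * A + R := by rw [norm_mul]; simp [hA']; linarith
        _ ≤ 3 * A := by linarith
    have hzwlow : A / 2 ≤ ‖z - w p‖ := by
      calc A / 2 ≤ A - R := by linarith
        _ ≤ ‖w p‖ - ‖z‖ := by rw [hA']; linarith
        _ ≤ ‖z - w p‖ := by
            rw [norm_sub_rev]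
            linarith [norm_sub_norm_le (w p) z]
    have hden : ‖(z - w p) ^ 2 * w p ^ 2‖ = ‖z - w p‖ ^ 2 * A ^ 2 := by
      rw [norm_mul, norm_pow, norm_pow, hA']
    have hApos' : (0:ℝ) < A := by linarith
    rw [norm_div, hden]
    have hnum : ‖z * (2 * w p - z)‖ ≤ R * (3 * A) := by
      rw [norm_mul]
      exact mul_le_mul hzRz h2wz (norm_nonneg _) (le_of_lt hRpos)
    have hdenlow : A ^ 2 / 4 * A ^ 2 ≤ ‖z - w p‖ ^ 2 * A ^ 2 := by
      have : A / 2 * (A / 2) ≤ ‖z - w p‖ * ‖z - w p‖ := by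
        apply mul_le_mul hzwlow hzwlow (by positivity) (norm_nonneg _)
      nlinarith
    calc ‖z * (2 * w p - z)‖ / (‖z - w p‖ ^ 2 * A ^ 2)
        ≤ R * (3 * A) / (A ^ 2 / 4 * A ^ 2) := by
          apply div_le_div₀ (by positivity) hnum (by positivity) hdenlow
      _ = 12 * R / A ^ 3 := by field_simp; ring
  -- now assemble
  have htuo := tendstoUniformlyOn_tsum_of_cofinite_eventually hu hbound
  have hlim : DifferentiableOn ℂ (fun z => ∑' p, t p z) B :=
    htuo.tendstoLocallyUniformlyOn.differentiableOn
      (Filter.Eventually.of_forall hdiff) Metric.isOpen_ball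
  have hwp : DifferentiableOn ℂ (wp ω₁ ω₃) B := by
    have h1 : DifferentiableOn ℂ (fun z : ℂ => 1 / z ^ 2) B := by
      apply DifferentiableOn.div (differentiableOn_const 1)
        ((differentiable_id.pow 2).differentiableOn)
      intro z hz
      exact pow_ne_zero 2 (hz0 z hz)
    exact h1.add hlim
  exact hwp.analyticAt (Metric.isOpen_ball.mem_nhds (Metric.mem_ball_self hεpos))


include hδpos hδ in
theorem isOpen_compl_halfLattice : IsOpen (halfLattice ω₁ ω₃)ᶜ := by
  rw [Metric.isOpen_iff]
  intro x hx
  obtain ⟨ε, hεpos, hball⟩ := exists_ball_disjoint hδpos hδ hx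
  exact ⟨ε, hεpos, fun z hz => hball z (Metric.ball_subset_closedBall hz)⟩

theorem hper_mem (i : Fin 4) : hper ω₁ ω₃ i ∈ halfLattice ω₁ ω₃ := by
  fin_cases i
  · exact ⟨0, 0, by simp [hper]⟩
  · exact ⟨1, 0, by simp [hper]⟩
  · exact ⟨-1, -1, by simp [hper]; ring⟩
  · exact ⟨0, 1, by simp [hper]⟩

theorem shift_not_mem {x : ℂ} (hx : x ∉ halfLattice ω₁ ω₃) (i : Fin 4) :
    x + hper ω₁ ω₃ i ∉ halfLattice ω₁ ω₃ := by
  intro ⟨m, n, hmn⟩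
  obtain ⟨m', n', hmn'⟩ := hper_mem (ω₁ := ω₁) (ω₃ := ω₃) i
  exact hx ⟨m - m', n - n', by push_cast; rw [hmn'] at hmn; linear_combination hmn⟩

include hδpos hδ in
theorem heunPotential_analyticAt (l : Fin 4 → ℂ) {x : ℂ} (hx : x ∉ halfLattice ω₁ ω₃) :
    AnalyticAt ℂ (heunPotential ω₁ ω₃ l) x := by
  apply Finset.analyticAt_fun_sum
  intro i _
  apply AnalyticAt.mul analyticAt_const
  have h1 : AnalyticAt ℂ (wp ω₁ ω₃) (x + hper ω₁ ω₃ i) :=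
    wp_analyticAt hδpos hδ (shift_not_mem hx i)
  have h2 : AnalyticAt ℂ (fun z : ℂ => z + hper ω₁ ω₃ i) x :=
    analyticAt_id.add analyticAt_const
  exact AnalyticAt.comp (g := wp ω₁ ω₃) (f := fun z : ℂ => z + hper ω₁ ω₃ i) h1 h2

-- analytic off the half lattice
variable (ω₁ ω₃) in
def AnOff (f : ℂ → ℂ) : Prop := ∀ x ∉ halfLattice ω₁ ω₃, AnalyticAt ℂ f x

theorem AnOff.analyticOnNhd {f : ℂ → ℂ} (hf : AnOff ω₁ ω₃ f) :
    AnalyticOnNhd ℂ f (halfLattice ω₁ ω₃)ᶜ := fun x hx => hf x hx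

theorem anOff_deriv {f : ℂ → ℂ} (hf : AnOff ω₁ ω₃ f) : AnOff ω₁ ω₃ (_root_.deriv f) :=
  fun x hx => (hf.analyticOnNhd.deriv) x hx

include hδpos hδ in
theorem anOff_heunOp {f : ℂ → ℂ} (l : Fin 4 → ℂ) (hf : AnOff ω₁ ω₃ f) :
    AnOff ω₁ ω₃ (heunOp ω₁ ω₃ l f) := by
  intro x hx
  unfold heunOp
  apply AnalyticAt.add
  · rw [iteratedDeriv_two]
    exact ((anOff_deriv (anOff_deriv hf)) x hx).neg
  · exact (heunPotential_analyticAt hδpos hδ l hx).mul (hf x hx)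

include hδpos hδ in
theorem anOff_heunOp_iter {f : ℂ → ℂ} (l : Fin 4 → ℂ) (hf : AnOff ω₁ ω₃ f) (m : ℕ) :
    AnOff ω₁ ω₃ ((heunOp ω₁ ω₃ l)^[m] f) := by
  induction m with
  | zero => exact hf
  | succ m ih =>
    rw [Function.iterate_succ_apply']
    exact anOff_heunOp hδpos hδ l ih

include hδpos hδ in
theorem anOff_heunOp_iterX (l : Fin 4 → ℂ) {f : ℂ → ℂ}
    (hf : ∀ x ∉ halfLattice ω₁ ω₃, AnalyticAt ℂ f x) (m : ℕ) :
    ∀ x ∉ halfLattice ω₁ ω₃, AnalyticAt ℂ ((heunOp ω₁ ω₃ l)^[m] f) x :=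
  anOff_heunOp_iter hδpos hδ l hf m

end

section
variable {ω₁ ω₃ : ℂ}

theorem isOpen_compl_halfLattice' (hω : ω₁ ≠ 0) (hτ : 0 < (ω₃ / ω₁).im) :
    IsOpen (halfLattice ω₁ ω₃)ᶜ := by
  obtain ⟨d, hd1, hd2⟩ := lattice_lb ω₁ ω₃ hω hτ
  exact isOpen_compl_halfLattice hd1 hd2

theorem anOff_heunOp_iter' (hω : ω₁ ≠ 0) (hτ : 0 < (ω₃ / ω₁).im) (l : Fin 4 → ℂ) {f : ℂ → ℂ}
    (hf : ∀ x ∉ halfLattice ω₁ ω₃, AnalyticAt ℂ f x) (m : ℕ) :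
    ∀ x ∉ halfLattice ω₁ ω₃, AnalyticAt ℂ ((heunOp ω₁ ω₃ l)^[m] f) x := by
  obtain ⟨d, hd1, hd2⟩ := lattice_lb ω₁ ω₃ hω hτ
  exact anOff_heunOp_iterX hd1 hd2 l hf m

theorem anOff_deriv' {f : ℂ → ℂ} (hf : ∀ x ∉ halfLattice ω₁ ω₃, AnalyticAt ℂ f x) :
    ∀ x ∉ halfLattice ω₁ ω₃, AnalyticAt ℂ (_root_.deriv f) x :=
  fun x hx => AnalyticOnNhd.deriv (s := (halfLattice ω₁ ω₃)ᶜ) (fun y hy => hf y hy) x hx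

end

/-- derivative of a typical first-order term -/
theorem deriv_term {a b c d : ℂ → ℂ} {x : ℂ} (ha : DifferentiableAt ℂ a x)
    (hb : DifferentiableAt ℂ b x) (hc : DifferentiableAt ℂ c x) (hd : DifferentiableAt ℂ d x) :
    deriv (fun y => a y * b y - 2⁻¹ * (c y * d y)) x
      = deriv a x * b x + a x * deriv b x - 2⁻¹ * (deriv c x * d x + c x * deriv d x) := by
  rw [deriv_fun_sub (ha.fun_mul hb) ((hc.fun_mul hd).const_mul _), deriv_fun_mul ha hb,
    deriv_const_mul _ (hc.fun_mul hd), deriv_fun_mul hc hd]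

theorem combine (n : ℕ) (c v w : ℂ) (D V : ℕ → ℂ) :
    v * (c * ∑ k ∈ Finset.range n, D k) - 1 / 2 * w * (c * ∑ k ∈ Finset.range n, V k)
      = c * ∑ k ∈ Finset.range n, (v * D k - 1 / 2 * w * V k) := by
  rw [Finset.sum_sub_distrib, ← Finset.mul_sum, ← Finset.mul_sum]
  ring

theorem dsplit {n : ℕ} (f h : ℕ → ℕ → ℂ) :
    ∑ i ∈ Finset.range n, ∑ i' ∈ Finset.range n, (f i i' + h i i')
      = (∑ i ∈ Finset.range n, ∑ i' ∈ Finset.range n, f i i')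
        + ∑ i ∈ Finset.range n, ∑ i' ∈ Finset.range n, h i i' := by
  rw [← Finset.sum_add_distrib]
  exact Finset.sum_congr rfl fun i _ => by rw [← Finset.sum_add_distrib]

theorem dsplitsub {n : ℕ} (f h : ℕ → ℕ → ℂ) :
    ∑ i ∈ Finset.range n, ∑ i' ∈ Finset.range n, (f i i' - h i i')
      = (∑ i ∈ Finset.range n, ∑ i' ∈ Finset.range n, f i i')
        - ∑ i ∈ Finset.range n, ∑ i' ∈ Finset.range n, h i i' := by
  rw [← Finset.sum_sub_distrib]
  exact Finset.sum_congr rfl fun i _ => by rw [← Finset.sum_sub_distrib]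

theorem dfactor (n : ℕ) (E : ℂ) (c d : ℕ → ℂ) :
    ∑ i ∈ Finset.range n, ∑ i' ∈ Finset.range n, c i * d i' * E ^ (i + i')
      = (∑ i ∈ Finset.range n, c i * E ^ i) * ∑ i ∈ Finset.range n, d i * E ^ i := by
  rw [Finset.sum_mul_sum]
  refine Finset.sum_congr rfl fun i _ => Finset.sum_congr rfl fun i' _ => ?_
  rw [pow_add]; ring

theorem dfactor1 (n : ℕ) (E : ℂ) (c d : ℕ → ℂ) :
    ∑ i ∈ Finset.range n, ∑ i' ∈ Finset.range n, c i * d i' * E ^ (i + i' + 1)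
      = (∑ i ∈ Finset.range n, c i * E ^ i) * (∑ i ∈ Finset.range n, d i * E ^ i) * E := by
  rw [Finset.sum_mul_sum, Finset.sum_mul]
  refine Finset.sum_congr rfl fun i _ => ?_
  rw [Finset.sum_mul]
  refine Finset.sum_congr rfl fun i' _ => ?_
  rw [pow_add, pow_add, pow_one]; ring

theorem Lmono (n e : ℕ) (he : e < n) (c : ℂ) (t : ℕ → ℂ) :
    ∑ k ∈ Finset.range n, (Polynomial.C c * Polynomial.X ^ e).coeff k * t k = c * t e := by
  have h1 : ∀ k, (Polynomial.C c * Polynomial.X ^ e).coeff k * t k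
      = if k = e then c * t k else 0 := by
    intro k
    rw [Polynomial.coeff_C_mul, Polynomial.coeff_X_pow]
    split <;> simp
  rw [Finset.sum_congr rfl fun k _ => h1 k, Finset.sum_ite_eq' (Finset.range n) e fun k => c * t k,
    if_pos (Finset.mem_range.mpr he)]

end AQH

open Topology Filter in
/-- **Proposition 2.11** ([Tak3, Prop. 3.2]).  Let `A` be the commuting operator of
odd order `2g+1` of Proposition 2.4, written in its canonical form
`A = (-1)^g ∑_{j=0}^g ( ã_j(x) d/dx - ½ ã_j'(x) ) H^{g-j}`, let
`Ξ(x,E) = ∑_{i=0}^g ã_{g-i}(x)Eⁱ` and let `Q` be the monic polynomial of degree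
`2g+1` with `Q(E) = Ξ²(E-u) + ½ΞΞ_{xx} - ¼(Ξ_x)²`.  Then `A² + Q(H) = 0` as
differential operators. -/
theorem A_squared_plus_Q_of_H
    (ω₁ ω₃ : ℂ) (hω : ω₁ ≠ 0) (hτ : 0 < (ω₃ / ω₁).im)
    (l : Fin 4 → ℕ) (g : ℕ)
    (a : ℕ → ℂ → ℂ)
    (ha0 : a 0 = fun _ => 1)
    (hag : a (g + 1) = fun _ => 0)
    (ha : ∀ j : ℕ, ∀ x ∉ halfLattice ω₁ ω₃, AnalyticAt ℂ (a j) x)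
    (hODE : ∀ j : ℕ, j ≤ g → ∀ x ∉ halfLattice ω₁ ω₃,
      iteratedDeriv 3 (a j) x
        - 4 * heunPotential ω₁ ω₃ (fun i => (l i : ℂ)) x * deriv (a j) x
        + 4 * deriv (a (j + 1)) x
        - 2 * deriv (heunPotential ω₁ ω₃ (fun i => (l i : ℂ))) x * a j x = 0)
    (A : (ℂ → ℂ) → ℂ → ℂ)
    -- `A` in the canonical form of Propositions 2.5–2.6
    (hA : ∀ f : ℂ → ℂ, ∀ x : ℂ,
      A f x = (-1 : ℂ) ^ g *
        ∑ j ∈ Finset.range (g + 1),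
          (a j x * deriv ((heunOp ω₁ ω₃ (fun i => (l i : ℂ)))^[g - j] f) x
            - (1 / 2) * deriv (a j) x
                * (heunOp ω₁ ω₃ (fun i => (l i : ℂ)))^[g - j] f x))
    -- `A` commutes with `H`
    (hAH : ∀ f : ℂ → ℂ, (∀ x ∉ halfLattice ω₁ ω₃, AnalyticAt ℂ f x) →
      ∀ x ∉ halfLattice ω₁ ω₃,
        A (heunOp ω₁ ω₃ (fun i => (l i : ℂ)) f) x
          = heunOp ω₁ ω₃ (fun i => (l i : ℂ)) (A f) x)
    -- `Q` is the monic polynomial of degree `2g+1` built from `Ξ(x,E) = ∑ ã_{g-i}(x)Eⁱ`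
    (Q : Polynomial ℂ) (hQmonic : Q.Monic) (hQdeg : Q.natDegree = 2 * g + 1)
    (hQ : ∀ E : ℂ, ∀ x ∉ halfLattice ω₁ ω₃,
      Q.eval E
        = (∑ i ∈ Finset.range (g + 1), a (g - i) x * E ^ i) ^ 2
            * (E - heunPotential ω₁ ω₃ (fun i => (l i : ℂ)) x)
          + (1 / 2) * (∑ i ∈ Finset.range (g + 1), a (g - i) x * E ^ i)
              * iteratedDeriv 2
                  (fun z => ∑ i ∈ Finset.range (g + 1), a (g - i) z * E ^ i) x
          - (1 / 4) * (deriv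
              (fun z => ∑ i ∈ Finset.range (g + 1), a (g - i) z * E ^ i) x) ^ 2) :
    ∀ f : ℂ → ℂ, (∀ x ∉ halfLattice ω₁ ω₃, AnalyticAt ℂ f x) →
      ∀ x ∉ halfLattice ω₁ ω₃,
        A (A f) x
          + ∑ k ∈ Finset.range (2 * g + 2),
              Q.coeff k * (heunOp ω₁ ω₃ (fun i => (l i : ℂ)))^[k] f x = 0 := by
  intro f hf x hx
  set S := halfLattice ω₁ ω₃ with hS
  set H := heunOp ω₁ ω₃ (fun i => (l i : ℂ)) with hHdef
  set u := heunPotential ω₁ ω₃ (fun i => (l i : ℂ)) with hu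
  have hUopen : IsOpen Sᶜ := AQH.isOpen_compl_halfLattice' hω hτ
  have hUnhds : Sᶜ ∈ 𝓝 x := hUopen.mem_nhds hx
  -- analytic and differentiability facts
  have hFan : ∀ m, ∀ y, y ∉ S → AnalyticAt ℂ (H^[m] f) y :=
    fun m y hy => AQH.anOff_heunOp_iter' hω hτ _ hf m y hy
  have hFd : ∀ m, DifferentiableAt ℂ (H^[m] f) x := fun m => (hFan m x hx).differentiableAt
  have hF'd : ∀ m, DifferentiableAt ℂ (deriv (H^[m] f)) x :=
    fun m => (AQH.anOff_deriv' (fun y hy => hFan m y hy) x hx).differentiableAt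
  have h_ad : ∀ j, DifferentiableAt ℂ (a j) x := fun j => (ha j x hx).differentiableAt
  have h_a'an : ∀ j, ∀ y, y ∉ S → AnalyticAt ℂ (deriv (a j)) y :=
    fun j y hy => AQH.anOff_deriv' (ha j) y hy
  have h_a'd : ∀ j, DifferentiableAt ℂ (deriv (a j)) x :=
    fun j => (h_a'an j x hx).differentiableAt
  -- second derivative of iterates
  have hFsecond : ∀ m : ℕ, deriv (deriv (H^[m] f)) x = u x * H^[m] f x - H^[m+1] f x := by
    intro m
    have h1 : H^[m+1] f x = -(iteratedDeriv 2 (H^[m] f) x) + u x * H^[m] f x := by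
      rw [Function.iterate_succ_apply']; rfl
    rw [AQH.iteratedDeriv_two] at h1
    linear_combination h1
  have hsign : (-1 : ℂ) ^ g * (-1) ^ g = 1 := by
    rw [← pow_add, ← two_mul, pow_mul]; norm_num
  -- commutation of A with iterates of H
  have hcomm : ∀ m : ℕ, ∀ y, y ∉ S → H^[m] (A f) y = A (H^[m] f) y := by
    intro m
    induction m with
    | zero => intro y hy; rfl
    | succ m ih =>
      intro y hy
      rw [Function.iterate_succ_apply']
      have hev : H^[m] (A f) =ᶠ[𝓝 y] A (H^[m] f) :=
        Filter.eventuallyEq_of_mem (hUopen.mem_nhds hy) (fun z hz => ih z hz)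
      have hder : iteratedDeriv 2 (H^[m] (A f)) y = iteratedDeriv 2 (A (H^[m] f)) y := by
        rw [AQH.iteratedDeriv_two, AQH.iteratedDeriv_two]
        exact (hev.deriv.deriv).eq_of_nhds
      have hstep : A (H^[m+1] f) y = H (A (H^[m] f)) y := by
        rw [Function.iterate_succ_apply']
        exact hAH (H^[m] f) (fun z hz => hFan m z hz) y hy
      rw [hstep]
      show -(iteratedDeriv 2 (H^[m] (A f)) y) + u y * (H^[m] (A f) y)
        = -(iteratedDeriv 2 (A (H^[m] f)) y) + u y * (A (H^[m] f) y)
      rw [hder, ih y hy]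
  -- canonical form of A applied to iterates
  have hAF : ∀ j : ℕ, A (H^[g-j] f) = fun y => (-1 : ℂ) ^ g *
      ∑ k ∈ Finset.range (g + 1),
        (a k y * deriv (H^[g-k+(g-j)] f) y
          - 2⁻¹ * (deriv (a k) y * H^[g-k+(g-j)] f y)) := by
    intro j
    funext y
    rw [hA]
    congr 1
    refine Finset.sum_congr rfl fun k _ => ?_
    rw [show H^[g-k+(g-j)] f = H^[g-k] (H^[g-j] f) from Function.iterate_add_apply H _ _ f]
    ring
  have hdsum : ∀ j : ℕ, DifferentiableAt ℂ (fun y =>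
      ∑ k ∈ Finset.range (g + 1),
        (a k y * deriv (H^[g-k+(g-j)] f) y
          - 2⁻¹ * (deriv (a k) y * H^[g-k+(g-j)] f y))) x := by
    intro j
    apply DifferentiableAt.fun_sum
    intro k _
    exact ((h_ad k).mul (hF'd _)).sub (((h_a'd k).mul (hFd _)).const_mul _)
  have hAFval : ∀ j : ℕ, A (H^[g-j] f) x = (-1 : ℂ) ^ g *
      ∑ k ∈ Finset.range (g + 1),
        (a k x * deriv (H^[g-k+(g-j)] f) x
          - 2⁻¹ * (deriv (a k) x * H^[g-k+(g-j)] f x)) := by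
    intro j; rw [hAF j]
  have hderivAF : ∀ j : ℕ, deriv (A (H^[g-j] f)) x = (-1 : ℂ) ^ g *
      ∑ k ∈ Finset.range (g + 1),
        (deriv (a k) x * deriv (H^[g-k+(g-j)] f) x
            + a k x * (u x * H^[g-k+(g-j)] f x - H^[g-k+(g-j)+1] f x)
          - 2⁻¹ * (deriv (deriv (a k)) x * H^[g-k+(g-j)] f x
            + deriv (a k) x * deriv (H^[g-k+(g-j)] f) x)) := by
    intro j
    rw [hAF j, deriv_const_mul _ (hdsum j)]
    congr 1
    rw [deriv_fun_sum (fun k _ =>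
      ((h_ad k).fun_mul (hF'd _)).fun_sub (((h_a'd k).fun_mul (hFd _)).const_mul _))]
    refine Finset.sum_congr rfl fun k _ => ?_
    rw [AQH.deriv_term (h_ad k) (hF'd _) (h_a'd k) (hFd _), hFsecond]
  -- expansion of A (A f) x as a double sum
  have hAA : A (A f) x = ∑ j ∈ Finset.range (g + 1), ∑ k ∈ Finset.range (g + 1),
      (a j x * (deriv (a k) x * deriv (H^[g-k+(g-j)] f) x
            + a k x * (u x * H^[g-k+(g-j)] f x - H^[g-k+(g-j)+1] f x)
          - 2⁻¹ * (deriv (deriv (a k)) x * H^[g-k+(g-j)] f x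
            + deriv (a k) x * deriv (H^[g-k+(g-j)] f) x))
        - 1 / 2 * deriv (a j) x * (a k x * deriv (H^[g-k+(g-j)] f) x
            - 2⁻¹ * (deriv (a k) x * H^[g-k+(g-j)] f x))) := by
    rw [hA (A f) x]
    have hj : ∀ j ∈ Finset.range (g + 1),
        a j x * deriv (H^[g-j] (A f)) x - 1 / 2 * deriv (a j) x * (H^[g-j] (A f)) x
          = (-1 : ℂ) ^ g * ∑ k ∈ Finset.range (g + 1),
            (a j x * (deriv (a k) x * deriv (H^[g-k+(g-j)] f) x
                  + a k x * (u x * H^[g-k+(g-j)] f x - H^[g-k+(g-j)+1] f x)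
                - 2⁻¹ * (deriv (deriv (a k)) x * H^[g-k+(g-j)] f x
                  + deriv (a k) x * deriv (H^[g-k+(g-j)] f) x))
              - 1 / 2 * deriv (a j) x * (a k x * deriv (H^[g-k+(g-j)] f) x
                  - 2⁻¹ * (deriv (a k) x * H^[g-k+(g-j)] f x))) := by
      intro j _
      have h1 : H^[g-j] (A f) x = A (H^[g-j] f) x := hcomm (g-j) x hx
      have h2 : deriv (H^[g-j] (A f)) x = deriv (A (H^[g-j] f)) x :=
        (Filter.eventuallyEq_of_mem hUnhds (fun z hz => hcomm (g-j) z hz)).deriv_eq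
      rw [h1, h2, hderivAF j, hAFval j]
      exact AQH.combine (g+1) _ _ _ _ _
    rw [Finset.sum_congr rfl hj, ← Finset.mul_sum, ← mul_assoc, hsign, one_mul]
  -- derivative of the Ξ sums
  have hd1 : ∀ E : ℂ, ∀ y, y ∉ S → deriv (fun z => ∑ i ∈ Finset.range (g+1), a (g-i) z * E^i) y
      = ∑ i ∈ Finset.range (g+1), deriv (a (g-i)) y * E^i := by
    intro E y hy
    rw [deriv_fun_sum (fun i _ => ((ha (g-i) y hy).differentiableAt).mul_const _)]
    exact Finset.sum_congr rfl fun i _ =>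
      deriv_mul_const ((ha (g-i) y hy).differentiableAt) _
  have hd2 : ∀ E : ℂ, iteratedDeriv 2 (fun z => ∑ i ∈ Finset.range (g+1), a (g-i) z * E^i) x
      = ∑ i ∈ Finset.range (g+1), deriv (deriv (a (g-i))) x * E^i := by
    intro E
    rw [AQH.iteratedDeriv_two]
    have hev : deriv (fun z => ∑ i ∈ Finset.range (g+1), a (g-i) z * E^i)
        =ᶠ[𝓝 x] fun z => ∑ i ∈ Finset.range (g+1), deriv (a (g-i)) z * E^i :=
      Filter.eventuallyEq_of_mem hUnhds (fun y hy => hd1 E y hy)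
    rw [hev.deriv_eq, deriv_fun_sum (fun i _ => (h_a'd (g-i)).mul_const _)]
    exact Finset.sum_congr rfl fun i _ => deriv_mul_const (h_a'd (g-i)) _
  -- the explicit polynomial P
  set P : Polynomial ℂ := ∑ i ∈ Finset.range (g+1), ∑ i' ∈ Finset.range (g+1),
    (Polynomial.C (a (g-i) x * a (g-i') x) * Polynomial.X^(i+i'+1)
      + Polynomial.C (a (g-i) x * (2⁻¹ * deriv (deriv (a (g-i'))) x)
          - deriv (a (g-i)) x * (4⁻¹ * deriv (a (g-i')) x)
          - a (g-i) x * (a (g-i') x * u x)) * Polynomial.X^(i+i')) with hP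
  have hPeval : ∀ E : ℂ, Polynomial.eval E P =
      (∑ i ∈ Finset.range (g+1), a (g-i) x * E^i)
          * (∑ i ∈ Finset.range (g+1), a (g-i) x * E^i) * E
        + (∑ i ∈ Finset.range (g+1), a (g-i) x * E^i)
          * (∑ i ∈ Finset.range (g+1), (2⁻¹ * deriv (deriv (a (g-i))) x) * E^i)
        - (∑ i ∈ Finset.range (g+1), deriv (a (g-i)) x * E^i)
          * (∑ i ∈ Finset.range (g+1), (4⁻¹ * deriv (a (g-i)) x) * E^i)
        - (∑ i ∈ Finset.range (g+1), a (g-i) x * E^i)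
          * (∑ i ∈ Finset.range (g+1), (a (g-i) x * u x) * E^i) := by
    intro E
    rw [hP]
    have e0 : Polynomial.eval E (∑ i ∈ Finset.range (g+1), ∑ i' ∈ Finset.range (g+1),
        (Polynomial.C (a (g-i) x * a (g-i') x) * Polynomial.X^(i+i'+1)
          + Polynomial.C (a (g-i) x * (2⁻¹ * deriv (deriv (a (g-i'))) x)
              - deriv (a (g-i)) x * (4⁻¹ * deriv (a (g-i')) x)
              - a (g-i) x * (a (g-i') x * u x)) * Polynomial.X^(i+i')))
        = ∑ i ∈ Finset.range (g+1), ∑ i' ∈ Finset.range (g+1),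
          (a (g-i) x * a (g-i') x * E^(i+i'+1)
            + (a (g-i) x * (2⁻¹ * deriv (deriv (a (g-i'))) x)
                - deriv (a (g-i)) x * (4⁻¹ * deriv (a (g-i')) x)
                - a (g-i) x * (a (g-i') x * u x)) * E^(i+i')) := by
      rw [Polynomial.eval_finset_sum]
      refine Finset.sum_congr rfl fun i _ => ?_
      rw [Polynomial.eval_finset_sum]
      refine Finset.sum_congr rfl fun i' _ => ?_
      simp [Polynomial.eval_add, Polynomial.eval_mul, Polynomial.eval_pow]
    rw [e0]
    have e1 : ∑ i ∈ Finset.range (g+1), ∑ i' ∈ Finset.range (g+1),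
        (a (g-i) x * a (g-i') x * E^(i+i'+1)
          + (a (g-i) x * (2⁻¹ * deriv (deriv (a (g-i'))) x)
              - deriv (a (g-i)) x * (4⁻¹ * deriv (a (g-i')) x)
              - a (g-i) x * (a (g-i') x * u x)) * E^(i+i'))
        = ∑ i ∈ Finset.range (g+1), ∑ i' ∈ Finset.range (g+1),
          (a (g-i) x * a (g-i') x * E^(i+i'+1)
            + a (g-i) x * (2⁻¹ * deriv (deriv (a (g-i'))) x) * E^(i+i')
            - deriv (a (g-i)) x * (4⁻¹ * deriv (a (g-i')) x) * E^(i+i')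
            - a (g-i) x * (a (g-i') x * u x) * E^(i+i')) :=
      Finset.sum_congr rfl fun i _ => Finset.sum_congr rfl fun i' _ => by ring
    rw [e1]
    have e2 := AQH.dsplitsub (n := g+1)
      (fun i i' => a (g-i) x * a (g-i') x * E^(i+i'+1)
        + a (g-i) x * (2⁻¹ * deriv (deriv (a (g-i'))) x) * E^(i+i')
        - deriv (a (g-i)) x * (4⁻¹ * deriv (a (g-i')) x) * E^(i+i'))
      (fun i i' => a (g-i) x * (a (g-i') x * u x) * E^(i+i'))
    rw [e2]
    have e3 := AQH.dsplitsub (n := g+1)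
      (fun i i' => a (g-i) x * a (g-i') x * E^(i+i'+1)
        + a (g-i) x * (2⁻¹ * deriv (deriv (a (g-i'))) x) * E^(i+i'))
      (fun i i' => deriv (a (g-i)) x * (4⁻¹ * deriv (a (g-i')) x) * E^(i+i'))
    rw [e3]
    have e4 := AQH.dsplit (n := g+1)
      (fun i i' => a (g-i) x * a (g-i') x * E^(i+i'+1))
      (fun i i' => a (g-i) x * (2⁻¹ * deriv (deriv (a (g-i'))) x) * E^(i+i'))
    rw [e4]
    rw [AQH.dfactor1 (g+1) E (fun i => a (g-i) x) (fun i => a (g-i) x),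
      AQH.dfactor (g+1) E (fun i => a (g-i) x) (fun i => 2⁻¹ * deriv (deriv (a (g-i))) x),
      AQH.dfactor (g+1) E (fun i => deriv (a (g-i)) x) (fun i => 4⁻¹ * deriv (a (g-i)) x),
      AQH.dfactor (g+1) E (fun i => a (g-i) x) (fun i => a (g-i) x * u x)]
  have hQP : Q = P := by
    apply Polynomial.funext
    intro E
    rw [hQ E x hx, hd2 E, hd1 E x hx, hPeval E]
    have r2 : (∑ i ∈ Finset.range (g+1), (2⁻¹ * deriv (deriv (a (g-i))) x) * E^i)
        = 2⁻¹ * ∑ i ∈ Finset.range (g+1), deriv (deriv (a (g-i))) x * E^i := by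
      rw [Finset.mul_sum]; exact Finset.sum_congr rfl fun i _ => by ring
    have r3 : (∑ i ∈ Finset.range (g+1), (4⁻¹ * deriv (a (g-i)) x) * E^i)
        = 4⁻¹ * ∑ i ∈ Finset.range (g+1), deriv (a (g-i)) x * E^i := by
      rw [Finset.mul_sum]; exact Finset.sum_congr rfl fun i _ => by ring
    have r4 : (∑ i ∈ Finset.range (g+1), (a (g-i) x * u x) * E^i)
        = (∑ i ∈ Finset.range (g+1), a (g-i) x * E^i) * u x := by
      rw [Finset.sum_mul]; exact Finset.sum_congr rfl fun i _ => by ring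
    rw [r2, r3, r4]
    ring
  -- the Q-part of the goal as a double sum
  have hLP : ∑ k ∈ Finset.range (2*g+2), Q.coeff k * H^[k] f x
      = ∑ i ∈ Finset.range (g+1), ∑ i' ∈ Finset.range (g+1),
          (a (g-i) x * a (g-i') x * H^[i+i'+1] f x
            + (a (g-i) x * (2⁻¹ * deriv (deriv (a (g-i'))) x)
                - deriv (a (g-i)) x * (4⁻¹ * deriv (a (g-i')) x)
                - a (g-i) x * (a (g-i') x * u x)) * H^[i+i'] f x) := by
    rw [hQP]
    have c0 : ∀ k, P.coeff k = ∑ i ∈ Finset.range (g+1), ∑ i' ∈ Finset.range (g+1),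
        (Polynomial.C (a (g-i) x * a (g-i') x) * Polynomial.X^(i+i'+1)
          + Polynomial.C (a (g-i) x * (2⁻¹ * deriv (deriv (a (g-i'))) x)
              - deriv (a (g-i)) x * (4⁻¹ * deriv (a (g-i')) x)
              - a (g-i) x * (a (g-i') x * u x)) * Polynomial.X^(i+i')).coeff k := by
      intro k
      rw [hP, Polynomial.finset_sum_coeff]
      exact Finset.sum_congr rfl fun i _ => by rw [Polynomial.finset_sum_coeff]
    calc ∑ k ∈ Finset.range (2*g+2), P.coeff k * H^[k] f x
        = ∑ k ∈ Finset.range (2*g+2), ∑ i ∈ Finset.range (g+1), ∑ i' ∈ Finset.range (g+1),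
            ((Polynomial.C (a (g-i) x * a (g-i') x) * Polynomial.X^(i+i'+1)
              + Polynomial.C (a (g-i) x * (2⁻¹ * deriv (deriv (a (g-i'))) x)
                  - deriv (a (g-i)) x * (4⁻¹ * deriv (a (g-i')) x)
                  - a (g-i) x * (a (g-i') x * u x)) * Polynomial.X^(i+i')).coeff k
              * H^[k] f x) := by
          refine Finset.sum_congr rfl fun k _ => ?_
          rw [c0 k, Finset.sum_mul]
          exact Finset.sum_congr rfl fun i _ => by rw [Finset.sum_mul]
      _ = ∑ i ∈ Finset.range (g+1), ∑ i' ∈ Finset.range (g+1), ∑ k ∈ Finset.range (2*g+2),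
            ((Polynomial.C (a (g-i) x * a (g-i') x) * Polynomial.X^(i+i'+1)
              + Polynomial.C (a (g-i) x * (2⁻¹ * deriv (deriv (a (g-i'))) x)
                  - deriv (a (g-i)) x * (4⁻¹ * deriv (a (g-i')) x)
                  - a (g-i) x * (a (g-i') x * u x)) * Polynomial.X^(i+i')).coeff k
              * H^[k] f x) := by
          rw [Finset.sum_comm]
          exact Finset.sum_congr rfl fun i _ => Finset.sum_comm
      _ = ∑ i ∈ Finset.range (g+1), ∑ i' ∈ Finset.range (g+1),
            (a (g-i) x * a (g-i') x * H^[i+i'+1] f x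
              + (a (g-i) x * (2⁻¹ * deriv (deriv (a (g-i'))) x)
                  - deriv (a (g-i)) x * (4⁻¹ * deriv (a (g-i')) x)
                  - a (g-i) x * (a (g-i') x * u x)) * H^[i+i'] f x) := by
          refine Finset.sum_congr rfl fun i hi => Finset.sum_congr rfl fun i' hi' => ?_
          have hi2 : i ≤ g := by have := Finset.mem_range.mp hi; omega
          have hi2' : i' ≤ g := by have := Finset.mem_range.mp hi'; omega
          have hsum : ∀ k, ((Polynomial.C (a (g-i) x * a (g-i') x) * Polynomial.X^(i+i'+1)
              + Polynomial.C (a (g-i) x * (2⁻¹ * deriv (deriv (a (g-i'))) x)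
                  - deriv (a (g-i)) x * (4⁻¹ * deriv (a (g-i')) x)
                  - a (g-i) x * (a (g-i') x * u x)) * Polynomial.X^(i+i')).coeff k
                * H^[k] f x)
              = (Polynomial.C (a (g-i) x * a (g-i') x) * Polynomial.X^(i+i'+1)).coeff k
                  * H^[k] f x
                + (Polynomial.C (a (g-i) x * (2⁻¹ * deriv (deriv (a (g-i'))) x)
                    - deriv (a (g-i)) x * (4⁻¹ * deriv (a (g-i')) x)
                    - a (g-i) x * (a (g-i') x * u x)) * Polynomial.X^(i+i')).coeff k
                  * H^[k] f x := by
            intro k; rw [Polynomial.coeff_add, add_mul]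
          rw [Finset.sum_congr rfl fun k _ => hsum k, Finset.sum_add_distrib,
            AQH.Lmono (2*g+2) (i+i'+1) (by omega) _ _, AQH.Lmono (2*g+2) (i+i') (by omega) _ _]
  -- reflect the indices
  have hrefl : ∑ i ∈ Finset.range (g+1), ∑ i' ∈ Finset.range (g+1),
      (a (g-i) x * a (g-i') x * H^[i+i'+1] f x
        + (a (g-i) x * (2⁻¹ * deriv (deriv (a (g-i'))) x)
            - deriv (a (g-i)) x * (4⁻¹ * deriv (a (g-i')) x)
            - a (g-i) x * (a (g-i') x * u x)) * H^[i+i'] f x)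
      = ∑ j ∈ Finset.range (g+1), ∑ k ∈ Finset.range (g+1),
        (a j x * a k x * H^[g-k+(g-j)+1] f x
          + (a j x * (2⁻¹ * deriv (deriv (a k)) x)
              - deriv (a j) x * (4⁻¹ * deriv (a k) x)
              - a j x * (a k x * u x)) * H^[g-k+(g-j)] f x) := by
    rw [← Finset.sum_range_reflect]
    refine Finset.sum_congr rfl fun j hj => ?_
    rw [← Finset.sum_range_reflect]
    refine Finset.sum_congr rfl fun k hk => ?_
    have hj' : j ≤ g := by have := Finset.mem_range.mp hj; omega
    have hk' : k ≤ g := by have := Finset.mem_range.mp hk; omega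
    have e1 : g + 1 - 1 - j = g - j := by omega
    have e2 : g + 1 - 1 - k = g - k := by omega
    rw [e1, e2]
    have e3 : g - (g - j) = j := by omega
    have e4 : g - (g - k) = k := by omega
    have e5 : g - j + (g - k) + 1 = g - k + (g - j) + 1 := by omega
    have e6 : g - j + (g - k) = g - k + (g - j) := by omega
    rw [e3, e4, e5, e6]
  rw [hAA, hLP, hrefl]
  -- AQH.combine into one double sum and cancel by antisymmetry
  have hAQH.combine := (AQH.dsplit (n := g+1)
    (fun j k => (a j x * (deriv (a k) x * deriv (H^[g-k+(g-j)] f) x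
          + a k x * (u x * H^[g-k+(g-j)] f x - H^[g-k+(g-j)+1] f x)
        - 2⁻¹ * (deriv (deriv (a k)) x * H^[g-k+(g-j)] f x
          + deriv (a k) x * deriv (H^[g-k+(g-j)] f) x))
      - 1 / 2 * deriv (a j) x * (a k x * deriv (H^[g-k+(g-j)] f) x
          - 2⁻¹ * (deriv (a k) x * H^[g-k+(g-j)] f x))))
    (fun j k => (a j x * a k x * H^[g-k+(g-j)+1] f x
      + (a j x * (2⁻¹ * deriv (deriv (a k)) x)
          - deriv (a j) x * (4⁻¹ * deriv (a k) x)
          - a j x * (a k x * u x)) * H^[g-k+(g-j)] f x))).symm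
  rw [hAQH.combine]
  set G : ℕ → ℕ → ℂ := fun j k =>
    (a j x * (deriv (a k) x * deriv (H^[g-k+(g-j)] f) x
          + a k x * (u x * H^[g-k+(g-j)] f x - H^[g-k+(g-j)+1] f x)
        - 2⁻¹ * (deriv (deriv (a k)) x * H^[g-k+(g-j)] f x
          + deriv (a k) x * deriv (H^[g-k+(g-j)] f) x))
      - 1 / 2 * deriv (a j) x * (a k x * deriv (H^[g-k+(g-j)] f) x
          - 2⁻¹ * (deriv (a k) x * H^[g-k+(g-j)] f x)))
    + (a j x * a k x * H^[g-k+(g-j)+1] f x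
      + (a j x * (2⁻¹ * deriv (deriv (a k)) x)
          - deriv (a j) x * (4⁻¹ * deriv (a k) x)
          - a j x * (a k x * u x)) * H^[g-k+(g-j)] f x) with hG
  have hswap : ∑ j ∈ Finset.range (g+1), ∑ k ∈ Finset.range (g+1), G j k
      = ∑ j ∈ Finset.range (g+1), ∑ k ∈ Finset.range (g+1), G k j :=
    Finset.sum_comm
  have hzero : ∑ j ∈ Finset.range (g+1), ∑ k ∈ Finset.range (g+1), (G j k + G k j) = 0 := by
    rw [Finset.sum_eq_zero]
    intro j hj
    rw [Finset.sum_eq_zero]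
    intro k hk
    have e7 : g - j + (g - k) = g - k + (g - j) := by omega
    rw [hG]
    simp only []
    rw [e7]
    ring
  have hdouble : (∑ j ∈ Finset.range (g+1), ∑ k ∈ Finset.range (g+1), G j k)
      + ∑ j ∈ Finset.range (g+1), ∑ k ∈ Finset.range (g+1), G j k = 0 := by
    nth_rewrite 2 [hswap]
    rw [← hzero]
    exact (AQH.dsplit _ _).symm
  have := add_self_eq_zero.mp hdouble
  exact this
end
end
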